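/- Let E ≥ 1 and m ≥ 1 be natural numbers, let π : Fin E → ℝ and p : Fin E → ℝ be strictly positive (the class priors and the class-conditional density values at a fixed point), let h ∈ ℝ^m, and let w : Fin E → ℝ^m and b : Fin E → ℝ with w 0 = 0 and b 0 = 0. If for every τ ∈ Fin E the softmax output equals the true posterior, i.e. exp(⟨w τ, h⟩ + b τ) / (∑_{e} exp(⟨w e, h⟩ + b e)) = p τ · π τ / (∑_{e} p e · π e), then for every τ ∈ Fin E one has ⟨w τ, h⟩ + b τ = log (p τ) − log (p 0) + log (π τ / π 0). -/

import Mathlib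

/-!
Softmax is invariant under adding a constant to all logits, so only logit differences are
determined by the outputs: the ratio of two softmax outputs is `exp (z τ - z σ)`, and for the
Bayes posteriors the same ratio is `p τ π τ / (p σ π σ)`. Taking logarithms with `σ = 0`, where
the logit vanishes, gives the claim.
-/

open Real Finset

noncomputable def softmax {ι : Type*} [Fintype ι] (z : ι → ℝ) (i : ι) : ℝ :=
  exp (z i) / ∑ j, exp (z j)

theorem softmax_div_softmax {ι : Type*} [Fintype ι] (z : ι → ℝ) (τ σ : ι) :
    softmax z τ / softmax z σ = exp (z τ - z σ) := by
  have hS : (∑ j, exp (z j)) ≠ 0 := (sum_pos (fun j _ => exp_pos (z j)) ⟨σ, mem_univ σ⟩).ne'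
  rw [softmax, softmax, div_div_div_cancel_right₀ hS, exp_sub]

theorem sub_eq_log_sub_log_of_softmax_eq {ι : Type*} [Fintype ι] {z q : ι → ℝ}
    (hq : ∀ i, 0 < q i) (hz : ∀ i, softmax z i = q i / ∑ j, q j) (τ σ : ι) :
    z τ - z σ = log (q τ) - log (q σ) := by
  have hQ : (∑ j, q j) ≠ 0 := (sum_pos (fun j _ => hq j) ⟨σ, mem_univ σ⟩).ne'
  have hratio : exp (z τ - z σ) = q τ / q σ := by
    rw [← softmax_div_softmax, hz, hz, div_div_div_cancel_right₀ hQ]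
  rw [← log_div (hq τ).ne' (hq σ).ne', ← hratio, log_exp]

theorem softmax_logits_eq_log_density_differences_general
    (E m : ℕ) [NeZero E]
    (prior pdens : Fin E → ℝ)
    (hprior : ∀ e, 0 < prior e) (hpdens : ∀ e, 0 < pdens e)
    (h : Fin m → ℝ) (w : Fin E → Fin m → ℝ) (b : Fin E → ℝ)
    (hw0 : w 0 = 0) (hb0 : b 0 = 0)
    (hsoftmax : ∀ τ : Fin E,
      Real.exp (∑ i, w τ i * h i + b τ) / (∑ e, Real.exp (∑ i, w e i * h i + b e))
        = pdens τ * prior τ / (∑ e, pdens e * prior e)) :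
    ∀ τ : Fin E,
      ∑ i, w τ i * h i + b τ
        = Real.log (pdens τ) - Real.log (pdens 0) + Real.log (prior τ / prior 0) := by
  intro τ
  have hlogit0 : ∑ i, w 0 i * h i + b 0 = 0 := by simp [hw0, hb0]
  have hdiff := sub_eq_log_sub_log_of_softmax_eq (z := fun e => ∑ i, w e i * h i + b e)
    (fun e => mul_pos (hpdens e) (hprior e)) hsoftmax τ 0
  simp only [hlogit0, sub_zero] at hdiff
  rw [hdiff, log_mul (hpdens τ).ne' (hprior τ).ne', log_mul (hpdens 0).ne' (hprior 0).ne',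
    log_div (hprior τ).ne' (hprior 0).ne']
  ring

/-- If a softmax classifier with weights `w`, biases `b` (with
`w 0 = 0`, `b 0 = 0`) and feature vector `h` outputs the true Bayes posteriors for classes
with priors `prior` and class-conditional density values `pdens`, then each logit equals the
log-density difference relative to class `0` plus the log prior ratio:
`⟨w τ, h⟩ + b τ = log (pdens τ) - log (pdens 0) + log (prior τ / prior 0)`. -/
theorem softmax_logits_eq_log_density_differences
    (E m : ℕ) [NeZero E] [NeZero m]
    (prior pdens : Fin E → ℝ)
    (hprior : ∀ e, 0 < prior e) (hpdens : ∀ e, 0 < pdens e)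
    (h : Fin m → ℝ) (w : Fin E → Fin m → ℝ) (b : Fin E → ℝ)
    (hw0 : w 0 = 0) (hb0 : b 0 = 0)
    (hsoftmax : ∀ τ : Fin E,
      Real.exp (∑ i, w τ i * h i + b τ) / (∑ e, Real.exp (∑ i, w e i * h i + b e))
        = pdens τ * prior τ / (∑ e, pdens e * prior e)) :
    ∀ τ : Fin E,
      ∑ i, w τ i * h i + b τ
        = Real.log (pdens τ) - Real.log (pdens 0) + Real.log (prior τ / prior 0) :=
  softmax_logits_eq_log_density_differences_general E m prior pdens hprior hpdens h w b hw0 hb0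
    hsoftmax
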